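/- arXiv:2006.04111 — 3 statements merged into one kernel-verified Lean document; each statement's English description precedes it below -/
import Mathlib

section
/- For every real number γ with 0 < γ ≤ 2, the doubly infinite series of the fractional centered difference coefficients sums to zero: the family (ω_k^{(γ)})_{k ∈ ℤ} is summable and Σ_{k=−∞}^{∞} ω_k^{(γ)} = 0. -/
open Real

/-- Fractional centered difference coefficients
`ω_k^{(γ)} = (−1)^k Γ(γ+1) / (Γ(γ/2 − k + 1) Γ(γ/2 + k + 1))`. -/
noncomputable def fracCenteredCoeff (γ : ℝ) (k : ℤ) : ℝ :=
  (-1 : ℝ) ^ k * Real.Gamma (γ + 1) /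
    (Real.Gamma (γ / 2 - k + 1) * Real.Gamma (γ / 2 + k + 1))

/-
With `a = γ / 2`, the Gamma recurrence gives `(a + k + 1) ω_{k+1} = (k - a) ω_k`, so
`γ ω_k = T_k - T_{k+1}` for `T_k = (a + k) ω_k`: the series telescopes. For `0 < a ≤ 1` the
coefficients `ω_k` with `k ≥ 1` are nonpositive, so `T` increases on `k ≥ 1`, and its limit
must be `0`, since otherwise `ω_k` would be comparable to `1 / k`. Hence
`∑_{k ≥ 1} ω_k = T_1 / γ = -ω_0 / 2`, and by the symmetry `ω_{-k} = ω_k` the whole sum is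
`ω_0 - ω_0 / 2 - ω_0 / 2 = 0`.
-/

open Filter Finset Topology

theorem Real.inv_Gamma_eq_self_mul_inv_Gamma_add_one (s : ℝ) :
    (Gamma s)⁻¹ = s * (Gamma (s + 1))⁻¹ := by
  rcases ne_or_eq s 0 with hs | rfl
  · rw [Gamma_add_one hs, mul_inv, mul_inv_cancel_left₀ hs]
  · rw [zero_add, Gamma_zero, inv_zero, zero_mul]

theorem fracCenteredCoeff_neg (γ : ℝ) (k : ℤ) :
    fracCenteredCoeff γ (-k) = fracCenteredCoeff γ k := by
  have hsign : (-1 : ℝ) ^ (-k) = (-1) ^ k := by rw [zpow_neg, ← inv_zpow, inv_neg_one]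
  rw [fracCenteredCoeff, fracCenteredCoeff, hsign, Int.cast_neg, sub_neg_eq_add,
    ← sub_eq_add_neg, mul_comm (Gamma _)]

theorem fracCenteredCoeff_zero_pos {γ : ℝ} (hγ : -1 < γ) : 0 < fracCenteredCoeff γ 0 := by
  have hΓ : 0 < Gamma (γ / 2 + 1) := Gamma_pos_of_pos (by linarith)
  simp only [fracCenteredCoeff, Int.cast_zero, sub_zero, add_zero, zpow_zero, one_mul]
  exact div_pos (Gamma_pos_of_pos (by linarith)) (mul_pos hΓ hΓ)

-- At the poles of `Γ` both sides vanish (Mathlib sets `Γ = 0` there), so no case split is needed.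
theorem add_mul_fracCenteredCoeff_add_one (γ : ℝ) (k : ℤ) :
    (γ / 2 + k + 1) * fracCenteredCoeff γ (k + 1) = (k - γ / 2) * fracCenteredCoeff γ k := by
  set a := γ / 2
  have h₁ := inv_Gamma_eq_self_mul_inv_Gamma_add_one (a - k)
  have h₂ := inv_Gamma_eq_self_mul_inv_Gamma_add_one (a + k + 1)
  have hsign : (-1 : ℝ) ^ (k + 1) = -(-1) ^ k := by rw [zpow_add_one₀ (by norm_num)]; ring
  rw [fracCenteredCoeff, fracCenteredCoeff, hsign, Int.cast_add, Int.cast_one,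
    show a - (k + 1 : ℝ) + 1 = a - k by ring, show a + (k + 1 : ℝ) + 1 = a + k + 1 + 1 by ring,
    div_eq_mul_inv, div_eq_mul_inv, mul_inv, mul_inv, h₁, h₂]
  ring

theorem mul_fracCenteredCoeff_eq_sub (γ : ℝ) (k : ℤ) :
    γ * fracCenteredCoeff γ k =
      (γ / 2 + k) * fracCenteredCoeff γ k - (γ / 2 + k + 1) * fracCenteredCoeff γ (k + 1) := by
  linear_combination add_mul_fracCenteredCoeff_add_one γ k

theorem fracCenteredCoeff_natCast_add_one_nonpos {γ : ℝ} (hγ0 : 0 ≤ γ) (hγ2 : γ ≤ 2)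
    (n : ℕ) : fracCenteredCoeff γ (n + 1) ≤ 0 := by
  induction n with
  | zero =>
    have h := add_mul_fracCenteredCoeff_add_one γ 0
    have hω₀ := fracCenteredCoeff_zero_pos (γ := γ) (by linarith)
    push_cast at h ⊢
    nlinarith
  | succ n ih =>
    have h := add_mul_fracCenteredCoeff_add_one γ (n + 1)
    push_cast at h ⊢
    nlinarith

theorem hasSum_of_mul_eq_sub_succ_of_nonpos {f T : ℕ → ℝ} {c : ℝ} (hc : 0 < c)
    (hstep : ∀ n, c * f n = T n - T (n + 1)) (hf : ∀ n, f n ≤ 0) (hT : ∀ n, T n ≤ 0)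
    (hTf : ∀ n, (n + 2) * f n ≤ T n) :
    HasSum f (T 0 / c) := by
  have hpartial (n : ℕ) : ∑ k ∈ range n, f k = (T 0 - T n) / c := by
    rw [eq_div_iff hc.ne', sum_mul, ← sum_range_sub']
    exact sum_congr rfl fun k _ => by rw [mul_comm, hstep]
  have hsummable : Summable f := by
    refine neg_neg f ▸ (summable_of_sum_range_le (c := -T 0 / c) (fun n => neg_nonneg.2 (hf n))
      fun n => ?_).neg
    rw [sum_neg_distrib, hpartial, ← neg_div]
    gcongr
    linarith [hT n]
  obtain ⟨S, hS⟩ := hsummable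
  have hT_lim : Tendsto T atTop (𝓝 (T 0 - c * S)) := by
    refine ((hS.tendsto_sum_nat.const_mul c).const_sub (T 0)).congr fun n => ?_
    rw [hpartial]
    field_simp
    ring
  have hT_mono : Monotone T :=
    monotone_nat_of_le_succ fun n => by nlinarith [hstep n, hf n]
  -- A negative limit `L` would give `-f n ≥ -L / (n + 2)`, contradicting the harmonic series.
  have hlim_zero : T 0 - c * S = 0 := by
    set L := T 0 - c * S
    have hTL : ∀ n, T n ≤ L := hT_mono.ge_of_tendsto hT_lim
    refine le_antisymm (le_of_tendsto' hT_lim hT) (not_lt.1 fun hL => ?_)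
    refine Real.not_summable_one_div_natCast ((summable_nat_add_iff 2).1 ?_)
    refine (hS.summable.neg.div_const (-L)).of_nonneg_of_le (fun n => by positivity) fun n => ?_
    rw [le_div_iff₀ (neg_pos.2 hL), div_mul_eq_mul_div, one_mul, div_le_iff₀ (by positivity)]
    push_cast
    linarith [hTL n, hTf n]
  convert hS using 1
  rw [div_eq_iff hc.ne']
  linarith

theorem hasSum_fracCenteredCoeff_natCast_add_one {γ : ℝ} (hγ0 : 0 < γ) (hγ2 : γ ≤ 2) :
    HasSum (fun n : ℕ => fracCenteredCoeff γ (n + 1)) (-fracCenteredCoeff γ 0 / 2) := by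
  have hnonpos := fracCenteredCoeff_natCast_add_one_nonpos hγ0.le hγ2
  convert hasSum_of_mul_eq_sub_succ_of_nonpos (c := γ)
    (T := fun n : ℕ => (γ / 2 + n + 1) * fracCenteredCoeff γ (n + 1)) hγ0 (fun n => ?_) hnonpos
    (fun n => mul_nonpos_of_nonneg_of_nonpos (by positivity) (hnonpos n)) (fun n => ?_) using 1
  · have h := add_mul_fracCenteredCoeff_add_one γ 0
    push_cast at h ⊢
    field_simp
    linarith
  · simpa [add_assoc] using mul_fracCenteredCoeff_eq_sub γ (n + 1)
  · nlinarith [hnonpos n]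

theorem stmt_1 (γ : ℝ) (hγ0 : 0 < γ) (hγ2 : γ ≤ 2) :
    Summable (fun k : ℤ => fracCenteredCoeff γ k) ∧
    ∑' k : ℤ, fracCenteredCoeff γ k = 0 := by
  have hpos := hasSum_fracCenteredCoeff_natCast_add_one hγ0 hγ2
  have hneg : HasSum (fun n : ℕ => fracCenteredCoeff γ (-(n + 1)))
      (-fracCenteredCoeff γ 0 / 2) := by
    simpa only [fracCenteredCoeff_neg] using hpos
  have htotal : HasSum (fun k : ℤ => fracCenteredCoeff γ k) 0 := by
    convert hpos.of_add_one_of_neg_add_one hneg using 1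
    ring
  exact ⟨htotal.summable, htotal.tsum_eq⟩
end

section
/- Let n ≥ 1 and let a, b, c be real numbers with a·c > 0. Let A be the n×n real tridiagonal Toeplitz matrix with b on the main diagonal, a on the superdiagonal, and c on the subdiagonal (all other entries zero). Then for each j ∈ {1, 2, ..., n}, the nonzero vector x_j ∈ ℝ^n whose i-th entry is (c/a)^{i/2} sin(i j π/(n+1)) (i = 1, ..., n) satisfies A x_j = λ_j x_j, where λ_j = b + 2a √(c/a) cos(j π/(n+1)). -/
/-!
With `s = √(c/a)` and `θ = jπ/(n+1)`, the sequence `x_m = s^m sin(mθ)` satisfies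
`c x_m + b x_(m+1) + a x_(m+2) = (b + 2as cos θ) x_(m+1)` for every `m`, by
`sin((m+2)θ) + sin(mθ) = 2 sin((m+1)θ) cos θ` and `c = a s²`. Since moreover `x_0 = 0` and
`x_(n+1) = s^(n+1) sin(jπ) = 0`, every row of `A x = λ x`, including the first and the last, is
an instance of this recurrence. The vector is nonzero because `x_1 = s sin θ > 0`.
-/

open Real Matrix

def tridiagToeplitz {R : Type*} [Zero R] (n : ℕ) (a b c : R) : Matrix (Fin n) (Fin n) R :=
  of fun i j =>
    if i = j then b else if (j : ℕ) = i + 1 then a else if (i : ℕ) = j + 1 then c else 0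

section Tridiagonal

variable {R : Type*} [Semiring R] {n : ℕ} {a b c : R}

lemma tridiagToeplitz_apply (i k : Fin n) :
    tridiagToeplitz n a b c i k =
      (if (k : ℕ) + 1 = i then c else 0) + (if (k : ℕ) + 1 = i + 1 then b else 0) +
        (if (k : ℕ) + 1 = i + 2 then a else 0) := by
  simp only [tridiagToeplitz, of_apply, Fin.ext_iff]
  split_ifs <;> first | omega | simp

/-- Padding the vector with zeros at `0` and `n + 1` turns the first and last rows into
instances of the interior three-term formula. -/
lemma tridiagToeplitz_mulVec_apply {f : ℕ → R} (h0 : f 0 = 0) (hn : f (n + 1) = 0)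
    (i : Fin n) :
    (tridiagToeplitz n a b c *ᵥ fun k => f (k + 1)) i =
      c * f i + b * f (i + 1) + a * f (i + 2) := by
  set t : ℕ → R := fun m => (if m = (i : ℕ) then c else 0) + (if m = (i : ℕ) + 1 then b else 0) +
    (if m = (i : ℕ) + 2 then a else 0)
  have hsum : ∑ k : Fin n, tridiagToeplitz n a b c i k * f (k + 1) =
      ∑ m ∈ Finset.range (n + 2), t m * f m := by
    rw [Finset.sum_range_succ, Finset.sum_range_succ', hn, h0]
    simp only [mul_zero, add_zero, tridiagToeplitz_apply]
    exact Fin.sum_univ_eq_sum_range (fun k => t (k + 1) * f (k + 1)) n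
  have hi : (i : ℕ) < n + 2 := by omega
  rw [mulVec, dotProduct, hsum]
  simp [t, add_mul, Finset.sum_add_distrib, ite_mul, Finset.sum_ite_eq', hi]

lemma tridiagToeplitz_mulVec_eq_smul_of_recurrence {f : ℕ → R} {μ : R} (h0 : f 0 = 0)
    (hn : f (n + 1) = 0) (hrec : ∀ m, c * f m + b * f (m + 1) + a * f (m + 2) = μ * f (m + 1)) :
    (tridiagToeplitz n a b c *ᵥ fun k : Fin n => f (k + 1)) = μ • fun k : Fin n => f (k + 1) :=
  funext fun i => by rw [tridiagToeplitz_mulVec_apply h0 hn, hrec]; rfl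

end Tridiagonal

lemma pow_mul_sin_recurrence (s θ : ℝ) (m : ℕ) :
    s ^ 2 * (s ^ m * sin (m * θ)) + s ^ (m + 2) * sin ((m + 2 : ℕ) * θ) =
      2 * s * cos θ * (s ^ (m + 1) * sin ((m + 1 : ℕ) * θ)) := by
  have h := sin_add_sin ((m + 2) * θ) (m * θ)
  rw [show ((m + 2) * θ + m * θ) / 2 = (m + 1) * θ by ring,
    show ((m + 2) * θ - m * θ) / 2 = θ by ring] at h
  push_cast
  linear_combination s ^ (m + 2) * h

theorem tridiagToeplitz_mulVec_pow_mul_sin {n : ℕ} {a b c s θ : ℝ} (hc : c = a * s ^ 2)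
    (hθ : sin ((n + 1) * θ) = 0) :
    (tridiagToeplitz n a b c *ᵥ
        fun k : Fin n => s ^ ((k : ℕ) + 1) * sin (((k : ℕ) + 1 : ℕ) * θ)) =
      (b + 2 * a * s * cos θ) •
        fun k : Fin n => s ^ ((k : ℕ) + 1) * sin (((k : ℕ) + 1 : ℕ) * θ) := by
  refine tridiagToeplitz_mulVec_eq_smul_of_recurrence (f := fun m => s ^ m * sin (m * θ))
    (by simp) (by simp [hθ]) fun m => ?_
  linear_combination a * pow_mul_sin_recurrence s θ m + hc * (s ^ m * sin (m * θ))

theorem stmt_4_general (n : ℕ) (a b c : ℝ) (hac : 0 < a * c)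
    (A : Matrix (Fin n) (Fin n) ℝ)
    (hA : ∀ i j : Fin n, A i j =
      if i = j then b
      else if (j : ℕ) = (i : ℕ) + 1 then a
      else if (i : ℕ) = (j : ℕ) + 1 then c
      else 0)
    (j : Fin n) :
    (fun i : Fin n =>
        (c / a) ^ ((((i : ℕ) : ℝ) + 1) / 2) *
          Real.sin ((((i : ℕ) : ℝ) + 1) * (((j : ℕ) : ℝ) + 1) * Real.pi / ((n : ℝ) + 1)))
      ≠ 0 ∧
    A.mulVec (fun i : Fin n =>
        (c / a) ^ ((((i : ℕ) : ℝ) + 1) / 2) *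
          Real.sin ((((i : ℕ) : ℝ) + 1) * (((j : ℕ) : ℝ) + 1) * Real.pi / ((n : ℝ) + 1)))
      = (b + 2 * a * Real.sqrt (c / a) * Real.cos ((((j : ℕ) : ℝ) + 1) * Real.pi / ((n : ℝ) + 1))) •
        (fun i : Fin n =>
        (c / a) ^ ((((i : ℕ) : ℝ) + 1) / 2) *
          Real.sin ((((i : ℕ) : ℝ) + 1) * (((j : ℕ) : ℝ) + 1) * Real.pi / ((n : ℝ) + 1))) := by
  have ha : a ≠ 0 := by rintro rfl; simp at hac
  have hca : 0 < c / a := by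
    rw [show c / a = a * c / a ^ 2 by field_simp]
    positivity
  set s := √(c / a)
  have hc : c = a * s ^ 2 := by rw [sq_sqrt hca.le]; field_simp
  set θ := ((j : ℕ) + 1) * π / ((n : ℝ) + 1)
  have hθ : 0 < θ ∧ θ < π := by
    have hj : ((j : ℕ) : ℝ) + 1 < n + 1 := by exact_mod_cast Nat.succ_lt_succ j.isLt
    constructor
    · positivity
    · rw [div_lt_iff₀ (by positivity)]
      nlinarith [pi_pos]
  have hsin : sin ((n + 1) * θ) = 0 := by
    rw [show ((n : ℝ) + 1) * θ = ((j : ℕ) + 1 : ℕ) * π by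
      push_cast; simp only [θ]; field_simp]
    exact sin_nat_mul_pi _
  have hx : (fun i : Fin n => (c / a) ^ ((((i : ℕ) : ℝ) + 1) / 2) *
      sin ((((i : ℕ) : ℝ) + 1) * (((j : ℕ) : ℝ) + 1) * π / ((n : ℝ) + 1))) =
      fun i : Fin n => s ^ ((i : ℕ) + 1) * sin (((i : ℕ) + 1 : ℕ) * θ) := by
    funext i
    rw [show s = (c / a) ^ (1 / 2 : ℝ) from sqrt_eq_rpow _, ← rpow_mul_natCast hca.le]
    congr 2 <;> push_cast <;> ring
  rw [hx, show A = tridiagToeplitz n a b c from Matrix.ext hA]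
  refine ⟨fun h => ?_, tridiagToeplitz_mulVec_pow_mul_sin hc hsin⟩
  have h0 := congrFun h ⟨0, j.pos⟩
  simp only [zero_add, pow_one, Nat.cast_one, one_mul, Pi.zero_apply] at h0
  exact (mul_pos (sqrt_pos.2 hca) (sin_pos_of_pos_of_lt_pi hθ.1 hθ.2)).ne' h0

theorem stmt_4 (n : ℕ) (hn : 1 ≤ n) (a b c : ℝ) (hac : 0 < a * c)
    (A : Matrix (Fin n) (Fin n) ℝ)
    (hA : ∀ i j : Fin n, A i j =
      if i = j then b
      else if (j : ℕ) = (i : ℕ) + 1 then a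
      else if (i : ℕ) = (j : ℕ) + 1 then c
      else 0)
    (j : Fin n) :
    (fun i : Fin n =>
        (c / a) ^ ((((i : ℕ) : ℝ) + 1) / 2) *
          Real.sin ((((i : ℕ) : ℝ) + 1) * (((j : ℕ) : ℝ) + 1) * Real.pi / ((n : ℝ) + 1)))
      ≠ 0 ∧
    A.mulVec (fun i : Fin n =>
        (c / a) ^ ((((i : ℕ) : ℝ) + 1) / 2) *
          Real.sin ((((i : ℕ) : ℝ) + 1) * (((j : ℕ) : ℝ) + 1) * Real.pi / ((n : ℝ) + 1)))
      = (b + 2 * a * Real.sqrt (c / a) * Real.cos ((((j : ℕ) : ℝ) + 1) * Real.pi / ((n : ℝ) + 1))) •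
        (fun i : Fin n =>
        (c / a) ^ ((((i : ℕ) : ℝ) + 1) / 2) *
          Real.sin ((((i : ℕ) : ℝ) + 1) * (((j : ℕ) : ℝ) + 1) * Real.pi / ((n : ℝ) + 1))) :=
  stmt_4_general n a b c hac A hA j
end

section
/- For every real number γ with 0 < γ ≤ 2 there exists a constant C > 0 such that for all θ ∈ ℝ: | ((1 + γ/12) − (γ/12) cos θ) · |2 sin(θ/2)|^γ − |θ|^γ | ≤ C |θ|^{γ+4}. -/
/-!
Writing `2 sin (θ/2) = θ · sinc (θ/2)`, the symbol is `|θ|^γ · A θ · sinc (θ/2)^γ` with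
`A θ = 1 + (γ/12)(1 - cos θ)`. For `|θ| ≤ 1` Taylor bounds give `A θ = 1 + γθ²/24 + O(θ⁴)` and
`sinc (θ/2)^γ = 1 - γθ²/24 + O(θ⁴)`; the weight `γ/12` is exactly what makes the `θ²` terms
cancel, so `A θ · sinc (θ/2)^γ = 1 + O(θ⁴)`. For `|θ| ≥ 1` the symbol is bounded, hence both it
and `|θ|^γ` are `O(|θ|^(γ+4))`.
-/

open Real

lemma abs_log_one_sub_add_le {u : ℝ} (hu : |u| ≤ 1 / 2) : |log (1 - u) + u| ≤ 2 * u ^ 2 := by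
  have h := abs_log_sub_add_sum_range_le (hu.trans_lt (by norm_num)) 1
  simp only [Finset.sum_range_one, zero_add, pow_one, Nat.cast_zero, div_one] at h
  calc |log (1 - u) + u| = |u + log (1 - u)| := by rw [add_comm]
    _ ≤ |u| ^ 2 / (1 - |u|) := h
    _ ≤ 2 * u ^ 2 := by
      rw [div_le_iff₀ (by linarith), sq_abs]
      nlinarith [sq_nonneg u]

lemma abs_one_sub_rpow_sub_le {γ u : ℝ} (hu : |u| ≤ 1 / 2) (hγu : |γ| * |u| ≤ 1 / 2) :
    |(1 - u) ^ γ - (1 - γ * u)| ≤ (4 * γ ^ 2 + 2 * |γ|) * u ^ 2 := by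
  have hpos : 0 < 1 - u := by linarith [le_abs_self u]
  have hlog := abs_log_one_sub_add_le hu
  have hlog' : |log (1 - u)| ≤ 2 * |u| := by
    calc |log (1 - u)| = |(log (1 - u) + u) - u| := by ring_nf
      _ ≤ |log (1 - u) + u| + |u| := abs_sub _ _
      _ ≤ 2 * |u| := by nlinarith [sq_abs u, abs_nonneg u]
  set t := γ * log (1 - u) with ht
  have htabs : |t| ≤ 2 * |γ| * |u| := by
    rw [ht, abs_mul]
    calc |γ| * |log (1 - u)| ≤ |γ| * (2 * |u|) := by gcongr
      _ = 2 * |γ| * |u| := by ring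
  have hexp := abs_exp_sub_one_sub_id_le (x := t) (by linarith)
  have ht2 : t ^ 2 ≤ 4 * γ ^ 2 * u ^ 2 := by
    rw [← sq_abs t]
    calc |t| ^ 2 ≤ (2 * |γ| * |u|) ^ 2 := by gcongr
      _ = 4 * γ ^ 2 * u ^ 2 := by rw [mul_pow, mul_pow, sq_abs, sq_abs]; ring
  have hsplit : (1 - u) ^ γ - (1 - γ * u) = (exp t - 1 - t) + γ * (log (1 - u) + u) := by
    rw [rpow_def_of_pos hpos, mul_comm, ← ht]; ring
  rw [hsplit]
  calc |(exp t - 1 - t) + γ * (log (1 - u) + u)|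
      ≤ |exp t - 1 - t| + |γ| * |log (1 - u) + u| := by rw [← abs_mul]; exact abs_add_le _ _
    _ ≤ 4 * γ ^ 2 * u ^ 2 + |γ| * (2 * u ^ 2) := by gcongr; linarith
    _ = (4 * γ ^ 2 + 2 * |γ|) * u ^ 2 := by ring

lemma sin_eq_mul_sinc (x : ℝ) : sin x = x * sinc x := by
  rcases eq_or_ne x 0 with rfl | hx
  · simp
  · rw [sinc_of_ne_zero hx, mul_div_cancel₀ _ hx]

lemma sinc_pos {x : ℝ} (hx : |x| < π) : 0 < sinc x := by
  rcases lt_trichotomy x 0 with h | rfl | h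
  · rw [sinc_of_ne_zero h.ne]
    exact div_pos_of_neg_of_neg (sin_neg_of_neg_of_neg_pi_lt h (by linarith [neg_abs_le x])) h
  · simp
  · rw [sinc_of_ne_zero h.ne']
    exact div_pos (sin_pos_of_pos_of_lt_pi h (by linarith [le_abs_self x])) h

lemma abs_sinc_sub_le {y : ℝ} (hy : |y| ≤ 1) : |sinc y - (1 - y ^ 2 / 6)| ≤ y ^ 4 / 100 := by
  rcases eq_or_ne y 0 with rfl | hy0
  · simp
  have hy' : 0 < |y| := abs_pos.mpr hy0
  have h : sinc y - (1 - y ^ 2 / 6) = (sin y - (y - y ^ 3 / 6)) / y := by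
    rw [sinc_of_ne_zero hy0]; field_simp
  rw [h, abs_div, div_le_iff₀ hy']
  calc |sin y - (y - y ^ 3 / 6)| ≤ |y| ^ 5 / 100 := sin_bound hy
    _ = y ^ 4 / 100 * |y| := by
      rw [pow_succ, pow_abs, abs_of_nonneg (by positivity : 0 ≤ y ^ 4)]; ring

lemma abs_sinc_half_rpow_sub_le {γ θ : ℝ} (hγ0 : 0 ≤ γ) (hγ2 : γ ≤ 2) (hθ : |θ| ≤ 1) :
    |sinc (θ / 2) ^ γ - (1 - γ * θ ^ 2 / 24)| ≤ θ ^ 4 / 16 := by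
  set e := θ ^ 2 with he
  have he1 : e ≤ 1 := by rw [he, ← sq_abs]; nlinarith [abs_nonneg θ]
  have hθ4 : θ ^ 4 = e ^ 2 := by rw [he]; ring
  set u := 1 - sinc (θ / 2) with hu
  have huε : |u - e / 24| ≤ e ^ 2 / 1600 := by
    have hs := abs_sinc_sub_le (y := θ / 2) (by rw [abs_div]; norm_num; linarith)
    rw [show u - e / 24 = -(sinc (θ / 2) - (1 - (θ / 2) ^ 2 / 6)) by rw [hu, he]; ring, abs_neg]
    exact hs.trans_eq (by rw [← hθ4]; ring)
  have hu20 : |u| ≤ e / 20 := by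
    obtain ⟨h1, h2⟩ := abs_le.mp huε
    rw [abs_le]; constructor <;> nlinarith [sq_nonneg θ]
  have hγu : |γ| * |u| ≤ e / 10 := by
    rw [abs_of_nonneg hγ0]
    calc γ * |u| ≤ 2 * (e / 20) := by gcongr
      _ = e / 10 := by ring
  have hP := abs_one_sub_rpow_sub_le (γ := γ) (u := u) (by linarith) (by linarith)
  rw [abs_of_nonneg hγ0, hu, sub_sub_cancel, ← hu] at hP
  have hu2 : u ^ 2 ≤ (e / 20) ^ 2 := by rw [← sq_abs]; gcongr
  have hrpow : (4 * γ ^ 2 + 2 * γ) * u ^ 2 ≤ e ^ 2 / 20 :=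
    calc (4 * γ ^ 2 + 2 * γ) * u ^ 2 ≤ (4 * 2 ^ 2 + 2 * 2) * (e / 20) ^ 2 := by gcongr
      _ = e ^ 2 / 20 := by ring
  have hγuε : |γ * (e / 24 - u)| ≤ e ^ 2 / 800 := by
    rw [abs_mul, abs_of_nonneg hγ0, abs_sub_comm]
    calc γ * |u - e / 24| ≤ 2 * (e ^ 2 / 1600) := by gcongr
      _ = e ^ 2 / 800 := by ring
  rw [hθ4, show sinc (θ / 2) ^ γ - (1 - γ * e / 24) =
    (sinc (θ / 2) ^ γ - (1 - γ * u)) + γ * (e / 24 - u) by ring]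
  calc _ ≤ |sinc (θ / 2) ^ γ - (1 - γ * u)| + |γ * (e / 24 - u)| := abs_add_le _ _
    _ ≤ e ^ 2 / 16 := by linarith [sq_nonneg e]

noncomputable def modFracDiffWeight (γ θ : ℝ) : ℝ := (1 + γ / 12) - γ / 12 * cos θ

noncomputable def modFracDiffSymbol (γ θ : ℝ) : ℝ :=
  modFracDiffWeight γ θ * |2 * sin (θ / 2)| ^ γ

section Symbol

variable {γ θ : ℝ}

lemma abs_modFracDiffWeight_sub_le (hγ0 : 0 ≤ γ) (hγ2 : γ ≤ 2) (hθ : |θ| ≤ 1) :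
    |modFracDiffWeight γ θ - (1 + γ * θ ^ 2 / 24)| ≤ θ ^ 4 / 100 := by
  have hc := cos_bound hθ
  rw [pow_abs, abs_of_nonneg (by positivity : 0 ≤ θ ^ 4)] at hc
  rw [modFracDiffWeight, show (1 + γ / 12) - γ / 12 * cos θ - (1 + γ * θ ^ 2 / 24) =
    -(γ / 12 * (cos θ - (1 - θ ^ 2 / 2))) by ring, abs_neg, abs_mul,
    abs_of_nonneg (by positivity : 0 ≤ γ / 12)]
  calc γ / 12 * |cos θ - (1 - θ ^ 2 / 2)| ≤ 2 / 12 * (θ ^ 4 * (5 / 96)) := by gcongr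
    _ ≤ θ ^ 4 / 100 := by nlinarith [pow_nonneg (sq_nonneg θ) 2]

lemma abs_modFracDiffSymbol_sub_le_of_abs_le_one (hγ0 : 0 ≤ γ) (hγ2 : γ ≤ 2) (hθ : |θ| ≤ 1) :
    |modFracDiffSymbol γ θ - |θ| ^ γ| ≤ |θ| ^ (γ + 4) := by
  set A := modFracDiffWeight γ θ
  set Q := sinc (θ / 2) ^ γ
  have hc : γ * θ ^ 2 / 24 ≤ θ ^ 2 / 12 := by
    calc γ * θ ^ 2 / 24 ≤ 2 * θ ^ 2 / 24 := by gcongr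
      _ = θ ^ 2 / 12 := by ring
  set c := γ * θ ^ 2 / 24
  have hsinc : 0 < sinc (θ / 2) := sinc_pos (by rw [abs_div]; norm_num; linarith [pi_gt_three])
  have hQ0 : 0 ≤ Q := rpow_nonneg hsinc.le γ
  have hQ1 : Q ≤ 1 := rpow_le_one hsinc.le (sinc_le_one _) hγ0
  have hc0 : 0 ≤ c := by positivity
  have hθ2 : θ ^ 2 ≤ 1 := by rw [← sq_abs]; nlinarith [abs_nonneg θ]
  have hA := abs_modFracDiffWeight_sub_le hγ0 hγ2 hθ
  have hQ := abs_sinc_half_rpow_sub_le hγ0 hγ2 hθ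
  have hAQ : |A * Q - 1| ≤ θ ^ 4 := by
    rw [show A * Q - 1 = (A - (1 + c)) * Q + (1 + c) * (Q - (1 - c)) - c ^ 2 by ring]
    calc _ ≤ |(A - (1 + c)) * Q| + |(1 + c) * (Q - (1 - c))| + |c ^ 2| :=
          (abs_sub _ _).trans (add_le_add_left (abs_add_le _ _) _)
      _ = |A - (1 + c)| * Q + (1 + c) * |Q - (1 - c)| + c ^ 2 := by
          rw [abs_mul, abs_mul, abs_of_nonneg hQ0, abs_of_nonneg (by linarith : 0 ≤ 1 + c),
            abs_of_nonneg (sq_nonneg c)]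
      _ ≤ θ ^ 4 / 100 * 1 + (1 + 1 / 12) * (θ ^ 4 / 16) + (θ ^ 2 / 12) ^ 2 := by
          gcongr; linarith
      _ ≤ θ ^ 4 := by nlinarith [pow_nonneg (sq_nonneg θ) 2]
  have hsymb : modFracDiffSymbol γ θ = |θ| ^ γ * (A * Q) := by
    rw [modFracDiffSymbol, sin_eq_mul_sinc, ← mul_assoc, mul_div_cancel₀ θ two_ne_zero, abs_mul,
      abs_of_pos hsinc, mul_rpow (abs_nonneg θ) hsinc.le]
    ring
  have hpow : |θ| ^ (γ + 4) = |θ| ^ γ * θ ^ 4 := by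
    rw [rpow_add' (abs_nonneg θ) (by linarith), rpow_ofNat, pow_abs,
      abs_of_nonneg (by positivity : 0 ≤ θ ^ 4)]
  rw [hsymb, hpow, ← mul_sub_one, abs_mul, abs_of_nonneg (rpow_nonneg (abs_nonneg θ) γ)]
  exact mul_le_mul_of_nonneg_left hAQ (rpow_nonneg (abs_nonneg θ) γ)

lemma one_le_modFracDiffWeight (hγ0 : 0 ≤ γ) : 1 ≤ modFracDiffWeight γ θ := by
  rw [modFracDiffWeight]; nlinarith [cos_le_one θ]

lemma modFracDiffSymbol_nonneg (hγ0 : 0 ≤ γ) : 0 ≤ modFracDiffSymbol γ θ :=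
  mul_nonneg (by linarith [one_le_modFracDiffWeight (θ := θ) hγ0]) (rpow_nonneg (abs_nonneg _) γ)

lemma modFracDiffSymbol_le (hγ0 : 0 ≤ γ) (hγ2 : γ ≤ 2) : modFracDiffSymbol γ θ ≤ 16 / 3 := by
  have hA : modFracDiffWeight γ θ ≤ 4 / 3 := by
    rw [modFracDiffWeight]; nlinarith [neg_one_le_cos θ]
  have hs : |2 * sin (θ / 2)| ≤ 2 := by
    rw [abs_mul, abs_two]; linarith [abs_sin_le_one (θ / 2)]
  have hsγ : |2 * sin (θ / 2)| ^ γ ≤ 4 :=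
    calc |2 * sin (θ / 2)| ^ γ ≤ (2 : ℝ) ^ γ := rpow_le_rpow (abs_nonneg _) hs hγ0
      _ ≤ (2 : ℝ) ^ (2 : ℝ) := rpow_le_rpow_of_exponent_le one_le_two hγ2
      _ = 4 := by norm_num
  calc modFracDiffSymbol γ θ ≤ 4 / 3 * 4 := by
        unfold modFracDiffSymbol
        gcongr
    _ = 16 / 3 := by norm_num

lemma abs_modFracDiffSymbol_sub_le_of_one_le_abs (hγ0 : 0 ≤ γ) (hγ2 : γ ≤ 2) (hθ : 1 ≤ |θ|) :
    |modFracDiffSymbol γ θ - |θ| ^ γ| ≤ 6 * |θ| ^ (γ + 4) := by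
  have hT0 : 0 ≤ |θ| ^ γ := rpow_nonneg (abs_nonneg θ) γ
  have hT : |θ| ^ γ ≤ |θ| ^ (γ + 4) := rpow_le_rpow_of_exponent_le hθ (by linarith)
  have hT1 : 1 ≤ |θ| ^ (γ + 4) := one_le_rpow hθ (by linarith)
  have h0 := modFracDiffSymbol_nonneg (θ := θ) hγ0
  have h1 := modFracDiffSymbol_le (θ := θ) hγ0 hγ2
  rw [abs_sub_le_iff]
  constructor <;> linarith

end Symbol

theorem stmt_12 (γ : ℝ) (hγ0 : 0 < γ) (hγ2 : γ ≤ 2) :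
    ∃ C : ℝ, 0 < C ∧ ∀ θ : ℝ,
      |((1 + γ / 12) - γ / 12 * Real.cos θ) * |2 * Real.sin (θ / 2)| ^ γ - |θ| ^ γ|
        ≤ C * |θ| ^ (γ + 4) := by
  refine ⟨6, by norm_num, fun θ => ?_⟩
  rcases le_total |θ| 1 with hθ | hθ
  · have h := abs_modFracDiffSymbol_sub_le_of_abs_le_one hγ0.le hγ2 hθ
    have : 0 ≤ |θ| ^ (γ + 4) := rpow_nonneg (abs_nonneg θ) _
    exact h.trans (by linarith)
  · exact abs_modFracDiffSymbol_sub_le_of_one_le_abs hγ0.le hγ2 hθ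
end
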